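/- For 𝒥 ∈ ℝ^d satisfying the consistency relation 𝒥 = μ ∫_{S^{d-1}} ω M_𝒥 dω with |𝒥| > 0, and z a unit vector orthogonal to 𝒥 that lies in the nullspace of C_𝒥 := μ ∫ ω ⊗ ∇_J M_𝒥 dω − Id, one has ∫_{S^{d-1}} (ω·z)^2 M_𝒥(ω) dω = 1/μ. -/

import Mathlib

open MeasureTheory Metric

/-- The surface measure on the unit sphere `S^{d-1} ⊂ ℝ^d`. -/
noncomputable def sphMeasure (d : ℕ) : Measure (sphere (0 : EuclideanSpace ℝ (Fin d)) 1) :=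
  (volume : Measure (EuclideanSpace ℝ (Fin d))).toSphere

/-- Normalization constant `Z(J) = ∫_{S^{d-1}} exp(ω·J) dω`. -/
noncomputable def vonMisesZ (d : ℕ) (J : EuclideanSpace ℝ (Fin d)) : ℝ :=
  ∫ ω : sphere (0 : EuclideanSpace ℝ (Fin d)) 1,
    Real.exp (inner ℝ (ω : EuclideanSpace ℝ (Fin d)) J) ∂(sphMeasure d)

/-- The von Mises density `M_J(ω) = exp(ω·J)/Z(J)`. -/
noncomputable def vonMises (d : ℕ) (J : EuclideanSpace ℝ (Fin d))
    (ω : sphere (0 : EuclideanSpace ℝ (Fin d)) 1) : ℝ :=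
  Real.exp (inner ℝ (ω : EuclideanSpace ℝ (Fin d)) J) / vonMisesZ d J

/-- The matrix `C_𝒥 := μ ∫ ω ⊗ ∇_J M_𝒥 dω − Id`. -/
noncomputable def Cmat (d : ℕ) (μ : ℝ) (𝒥 : EuclideanSpace ℝ (Fin d)) :
    Matrix (Fin d) (Fin d) ℝ := fun i j =>
  μ * (∫ ω : sphere (0 : EuclideanSpace ℝ (Fin d)) 1,
      (ω : EuclideanSpace ℝ (Fin d)) i *
        (gradient (fun J => vonMises d J ω) 𝒥) j ∂(sphMeasure d)) -
    (if i = j then 1 else 0)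

/-!
Differentiating `M_J = exp(ω·J) / Z(J)` gives `∇_J M_J(ω) = M_J(ω) (ω - ⟨ω⟩_J)`, where `⟨ω⟩_J` is
the mean of `ω` under `M_J`; hence `C_𝒥 = μ Cov_{M_𝒥}(ω) - Id`. The consistency relation reads
`μ ⟨ω⟩_𝒥 = 𝒥`, which is orthogonal to `z`, so contracting `C_𝒥 z = 0` with `z` leaves
`μ ∫ (ω·z)² M_𝒥 dω - |z|² = 0`.
-/

open Matrix

section QuadraticForm

variable {X ι : Type*} [Fintype ι] [MeasurableSpace X] {ν : Measure X}

theorem dotProduct_mulVec_of_integral_mul {f g : X → EuclideanSpace ℝ ι}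
    (hfg : ∀ i j, Integrable (fun x => f x i * g x j) ν) (v : EuclideanSpace ℝ ι) :
    (fun i => v i) ⬝ᵥ (of (fun i j => ∫ x, f x i * g x j ∂ν) *ᵥ fun i => v i) =
      ∫ x, inner ℝ (f x) v * inner ℝ (g x) v ∂ν := by
  have hexpand : ∀ x, inner ℝ (f x) v * inner ℝ (g x) v =
      ∑ i, ∑ j, v i * (f x i * g x j * v j) := fun x => by
    simp only [EuclideanSpace.inner_eq_star_dotProduct, star_trivial, dotProduct,
      Finset.sum_mul_sum]
    exact Finset.sum_congr rfl fun i _ => Finset.sum_congr rfl fun j _ => by ring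
  simp_rw [hexpand]
  rw [integral_finsetSum _ fun i _ => integrable_finsetSum _ fun j _ =>
    ((hfg i j).mul_const _).const_mul _]
  refine Finset.sum_congr rfl fun i _ => ?_
  rw [integral_finsetSum _ fun j _ => ((hfg i j).mul_const _).const_mul _, mulVec, dotProduct,
    Finset.mul_sum]
  refine Finset.sum_congr rfl fun j _ => ?_
  rw [integral_const_mul, integral_mul_const, of_apply]

end QuadraticForm

noncomputable def vonMisesMean (d : ℕ) (J : EuclideanSpace ℝ (Fin d)) : EuclideanSpace ℝ (Fin d) :=
  ∫ ω : sphere (0 : EuclideanSpace ℝ (Fin d)) 1,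
    vonMises d J ω • (ω : EuclideanSpace ℝ (Fin d)) ∂sphMeasure d

section VonMises

variable {d : ℕ}

local notation "E" => EuclideanSpace ℝ (Fin d)
local notation "𝕊" => sphere (0 : E) 1

instance : IsFiniteMeasure (sphMeasure d) := by
  unfold sphMeasure; infer_instance

theorem integrable_sphMeasure_of_continuous {F : Type*} [NormedAddCommGroup F] {f : 𝕊 → F}
    (hf : Continuous f) : Integrable f (sphMeasure d) :=
  hf.integrable_of_hasCompactSupport (.of_compactSpace f)

theorem continuous_exp_inner (J : E) : Continuous fun ω : 𝕊 => Real.exp (inner ℝ (ω : E) J) := by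
  fun_prop

theorem vonMisesZ_pos (hd : 0 < d) (J : E) : 0 < vonMisesZ d J := by
  have : NeZero (sphMeasure d) := ⟨by
    rw [sphMeasure, Ne, Measure.toSphere_eq_zero_iff_finrank, finrank_euclideanSpace_fin]
    exact hd.ne'⟩
  exact integral_exp_pos (integrable_sphMeasure_of_continuous (continuous_exp_inner J))

theorem norm_exp_inner_smul_innerSL_le {J x : E} (hx : x ∈ ball J 1) (ω : 𝕊) :
    ‖Real.exp (inner ℝ (ω : E) x) • innerSL ℝ (ω : E)‖ ≤ Real.exp (‖J‖ + 1) := by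
  have hω : ‖(ω : E)‖ = 1 := norm_eq_of_mem_sphere ω
  have hx' : ‖x‖ ≤ ‖J‖ + 1 := by
    have := norm_le_norm_add_norm_sub' x J
    rw [mem_ball_iff_norm] at hx
    linarith
  rw [norm_smul, innerSL_apply_norm, hω, mul_one, Real.norm_of_nonneg (Real.exp_pos _).le]
  refine Real.exp_le_exp.2 ((real_inner_le_norm _ _).trans ?_)
  rwa [hω, one_mul]

theorem hasGradientAt_vonMisesZ (J : E) :
    HasGradientAt (vonMisesZ d)
      (∫ ω : 𝕊, Real.exp (inner ℝ (ω : E) J) • (ω : E) ∂sphMeasure d) J := by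
  have hderiv : ∀ (ω : 𝕊) (x : E), HasFDerivAt (fun J : E => Real.exp (inner ℝ (ω : E) J))
      (Real.exp (inner ℝ (ω : E) x) • innerSL ℝ (ω : E)) x :=
    fun ω x => (innerSL ℝ (ω : E)).hasFDerivAt.exp
  have hcont : Continuous fun ω : 𝕊 => Real.exp (inner ℝ (ω : E) J) • innerSL ℝ (ω : E) := by
    fun_prop
  have hZ := hasFDerivAt_integral_of_dominated_of_fderiv_le (μ := sphMeasure d)
    (bound := fun _ => Real.exp (‖J‖ + 1)) (ball_mem_nhds J one_pos)
    (.of_forall fun x => (continuous_exp_inner x).aestronglyMeasurable)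
    (integrable_sphMeasure_of_continuous (continuous_exp_inner J))
    hcont.aestronglyMeasurable
    (.of_forall fun ω x hx => norm_exp_inner_smul_innerSL_le hx ω)
    (integrable_const _) (.of_forall fun ω x _ => hderiv ω x)
  refine hZ.congr_fderiv (ContinuousLinearMap.ext fun v => ?_)
  rw [ContinuousLinearMap.integral_apply (integrable_sphMeasure_of_continuous hcont),
    InnerProductSpace.toDual_apply_apply, real_inner_comm,
    ← integral_inner (integrable_sphMeasure_of_continuous (by fun_prop))]
  simp only [_root_.smul_apply, innerSL_apply_apply, smul_eq_mul,
    real_inner_smul_right, real_inner_comm]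

theorem vonMisesMean_eq (J : E) : vonMisesMean d J =
    (vonMisesZ d J)⁻¹ • ∫ ω : 𝕊, Real.exp (inner ℝ (ω : E) J) • (ω : E) ∂sphMeasure d := by
  rw [vonMisesMean, ← integral_smul]
  simp only [vonMises, div_eq_inv_mul, smul_smul]

theorem hasGradientAt_vonMises {J : E} (hZ : vonMisesZ d J ≠ 0) (ω : 𝕊) :
    HasGradientAt (fun J => vonMises d J ω) (vonMises d J ω • ((ω : E) - vonMisesMean d J)) J := by
  have hnum : HasFDerivAt (fun J : E => Real.exp (inner ℝ (ω : E) J))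
      (Real.exp (inner ℝ (ω : E) J) • innerSL ℝ (ω : E)) J :=
    (innerSL ℝ (ω : E)).hasFDerivAt.exp
  have hinv := (hasDerivAt_inv hZ).comp_hasFDerivAt J (hasGradientAt_vonMisesZ J).hasFDerivAt
  refine (hnum.mul hinv).congr_fderiv (ContinuousLinearMap.ext fun v => ?_)
  simp only [vonMisesMean_eq, vonMises, _root_.add_apply, _root_.smul_apply,
    Function.comp_apply, InnerProductSpace.toDual_apply_apply, innerSL_apply_apply, smul_eq_mul,
    real_inner_smul_left, inner_sub_left]
  field_simp
  ring

@[fun_prop]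
theorem continuous_vonMises (J : E) : Continuous (vonMises d J) :=
  (continuous_exp_inner J).div_const _

theorem dotProduct_Cmat_mulVec (hd : 0 < d) (μ : ℝ) (J z : E) :
    (fun i => z i) ⬝ᵥ (Cmat d μ J *ᵥ fun i => z i) =
      μ * (∫ ω : 𝕊, inner ℝ (ω : E) z *
        (vonMises d J ω * (inner ℝ (ω : E) z - inner ℝ (vonMisesMean d J) z)) ∂sphMeasure d) -
        ‖z‖ ^ 2 := by
  have hgrad : ∀ ω : 𝕊, gradient (fun J => vonMises d J ω) J =
      vonMises d J ω • ((ω : E) - vonMisesMean d J) :=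
    fun ω => (hasGradientAt_vonMises (vonMisesZ_pos hd J).ne' ω).gradient
  have hC : Cmat d μ J = μ • of (fun i j => ∫ ω : 𝕊,
      (ω : E) i * (vonMises d J ω • ((ω : E) - vonMisesMean d J)) j ∂sphMeasure d) - 1 := by
    ext i j
    simp [Cmat, hgrad, one_apply]
  rw [hC, sub_mulVec, smul_mulVec, one_mulVec, dotProduct_sub, dotProduct_smul,
    dotProduct_mulVec_of_integral_mul fun i j => integrable_sphMeasure_of_continuous (by fun_prop)]
  simp only [real_inner_smul_left, inner_sub_left, smul_eq_mul, ← real_inner_self_eq_norm_sq]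
  rfl

end VonMises

theorem transverse_second_moment_general (d : ℕ) (hd : 2 ≤ d) (μ : ℝ)
    (𝒥 : EuclideanSpace ℝ (Fin d))
    (hcons : 𝒥 = μ • ∫ ω : sphere (0 : EuclideanSpace ℝ (Fin d)) 1,
        vonMises d 𝒥 ω • (ω : EuclideanSpace ℝ (Fin d)) ∂(sphMeasure d))
    (z : EuclideanSpace ℝ (Fin d)) (hz : ‖z‖ = 1)
    (hperp : inner ℝ z 𝒥 = (0 : ℝ))
    (hnull : (Cmat d μ 𝒥).mulVec (fun i => z i) = 0) :
    (∫ ω : sphere (0 : EuclideanSpace ℝ (Fin d)) 1,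
        (inner ℝ (ω : EuclideanSpace ℝ (Fin d)) z : ℝ) ^ 2 * vonMises d 𝒥 ω
          ∂(sphMeasure d)) = 1 / μ := by
  have hquad := dotProduct_Cmat_mulVec (by omega) μ 𝒥 z
  rw [hnull, dotProduct_zero, hz, one_pow, eq_comm, sub_eq_zero] at hquad
  have hmean : μ * inner ℝ (vonMisesMean d 𝒥) z = 0 := by
    rw [← real_inner_smul_left, vonMisesMean, ← hcons, real_inner_comm, hperp]
  refine eq_one_div_of_mul_eq_one_right (.trans ?_ hquad)
  simp only [← integral_const_mul]
  congr 1 with ω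
  linear_combination (inner ℝ (ω : EuclideanSpace ℝ (Fin d)) z * vonMises d 𝒥 ω) * hmean

/-- For an equilibrium flux `𝒥 ≠ 0` and a unit vector `z ⊥ 𝒥` in the nullspace of `C_𝒥`,
one has `∫ (ω·z)² M_𝒥 dω = 1/μ`. -/
theorem transverse_second_moment (d : ℕ) (hd : 2 ≤ d) (μ : ℝ) (hμ : 0 < μ)
    (𝒥 : EuclideanSpace ℝ (Fin d)) (h𝒥 : 0 < ‖𝒥‖)
    (hcons : 𝒥 = μ • ∫ ω : sphere (0 : EuclideanSpace ℝ (Fin d)) 1,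
        vonMises d 𝒥 ω • (ω : EuclideanSpace ℝ (Fin d)) ∂(sphMeasure d))
    (z : EuclideanSpace ℝ (Fin d)) (hz : ‖z‖ = 1)
    (hperp : inner ℝ z 𝒥 = (0 : ℝ))
    (hnull : (Cmat d μ 𝒥).mulVec (fun i => z i) = 0) :
    (∫ ω : sphere (0 : EuclideanSpace ℝ (Fin d)) 1,
        (inner ℝ (ω : EuclideanSpace ℝ (Fin d)) z : ℝ) ^ 2 * vonMises d 𝒥 ω
          ∂(sphMeasure d)) = 1 / μ :=
  transverse_second_moment_general d hd μ 𝒥 hcons z hz hperp hnull
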